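/- For vector fields E, B on ℝ³ satisfying ∇·B = 0 and the source-carrying Maxwell relations ρ_e = ε ∇·E, J = (1/μ)∇×B − ε ∂E/∂t, ∂B/∂t = −∇×E, the Lorentz force density satisfies componentwise ρ_e E^i + (J×B)^i = ∂_j[ε E^i E^j + (1/μ) B^i B^j − ½(ε|E|² + (1/μ)|B|²)δ^{ij}] − ∂_t(ε E×B)^i. -/

import Mathlib

open scoped BigOperators
open Matrix

/-- partial derivative in time of a scalar field `f t x`. -/
noncomputable def pt (f : ℝ → (Fin 3 → ℝ) → ℝ) (t : ℝ) (x : Fin 3 → ℝ) : ℝ :=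
  deriv (fun s => f s x) t

/-- partial derivative in the `j`-th spatial coordinate of a scalar field. -/
noncomputable def pd (j : Fin 3) (f : ℝ → (Fin 3 → ℝ) → ℝ) (t : ℝ)
    (x : Fin 3 → ℝ) : ℝ :=
  deriv (fun s => f t (Function.update x j s)) (x j)

/-- divergence of a time-dependent vector field. -/
noncomputable def div3 (F : ℝ → (Fin 3 → ℝ) → Fin 3 → ℝ) (t : ℝ)
    (x : Fin 3 → ℝ) : ℝ :=
  ∑ j : Fin 3, pd j (fun t x => F t x j) t x

/-- curl of a time-dependent vector field. -/
noncomputable def curl3 (F : ℝ → (Fin 3 → ℝ) → Fin 3 → ℝ) (t : ℝ)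
    (x : Fin 3 → ℝ) : Fin 3 → ℝ :=
  ![pd 1 (fun t x => F t x 2) t x - pd 2 (fun t x => F t x 1) t x,
    pd 2 (fun t x => F t x 0) t x - pd 0 (fun t x => F t x 2) t x,
    pd 0 (fun t x => F t x 1) t x - pd 1 (fun t x => F t x 0) t x]

/-- time derivative of a time-dependent vector field, componentwise. -/
noncomputable def ptv (F : ℝ → (Fin 3 → ℝ) → Fin 3 → ℝ) (t : ℝ)
    (x : Fin 3 → ℝ) : Fin 3 → ℝ :=
  fun i => pt (fun t x => F t x i) t x

lemma update_contDiff (x : Fin 3 → ℝ) (j : Fin 3) :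
    ContDiff ℝ (⊤ : ℕ∞) (fun s : ℝ => Function.update x j s) := by
  rw [contDiff_pi]
  intro i
  simp only [Function.update_apply]
  by_cases h : i = j
  · simpa [h] using contDiff_fun_id
  · simpa [h] using (contDiff_const : ContDiff ℝ (⊤ : ℕ∞) fun _ : ℝ => x i)

lemma hasDerivAt_pd {F : ℝ → (Fin 3 → ℝ) → Fin 3 → ℝ}
    (hF : ContDiff ℝ (⊤ : ℕ∞) (fun p : ℝ × (Fin 3 → ℝ) => F p.1 p.2))
    (i j : Fin 3) (t : ℝ) (x : Fin 3 → ℝ) :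
    HasDerivAt (fun s => F t (Function.update x j s) i)
      (pd j (fun t x => F t x i) t x) (x j) := by
  have h1 : ContDiff ℝ (⊤ : ℕ∞) (fun p : ℝ × (Fin 3 → ℝ) => F p.1 p.2 i) :=
    contDiff_pi.mp hF i
  have h2 : ContDiff ℝ (⊤ : ℕ∞) (fun s : ℝ => ((t, Function.update x j s) : ℝ × (Fin 3 → ℝ))) :=
    contDiff_const.prodMk (update_contDiff x j)
  have h3 : ContDiff ℝ (⊤ : ℕ∞) (fun s : ℝ => F t (Function.update x j s) i) := h1.comp h2
  exact ((h3.differentiable (by simp)).differentiableAt).hasDerivAt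

lemma hasDerivAt_pt {F : ℝ → (Fin 3 → ℝ) → Fin 3 → ℝ}
    (hF : ContDiff ℝ (⊤ : ℕ∞) (fun p : ℝ × (Fin 3 → ℝ) => F p.1 p.2))
    (i : Fin 3) (t : ℝ) (x : Fin 3 → ℝ) :
    HasDerivAt (fun s => F s x i) (pt (fun t x => F t x i) t x) t := by
  have h1 : ContDiff ℝ (⊤ : ℕ∞) (fun p : ℝ × (Fin 3 → ℝ) => F p.1 p.2 i) :=
    contDiff_pi.mp hF i
  have h2 : ContDiff ℝ (⊤ : ℕ∞) (fun s : ℝ => ((s, x) : ℝ × (Fin 3 → ℝ))) :=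
    contDiff_id.prodMk contDiff_const
  have h3 : ContDiff ℝ (⊤ : ℕ∞) (fun s : ℝ => F s x i) := h1.comp h2
  exact ((h3.differentiable (by simp)).differentiableAt).hasDerivAt

/-- with ρ_e = ε∇·E, J = (1/μ)∇×B − ε∂_tE, ∇·B = 0 and
∇×E = −∂_tB, the Lorentz force density is a divergence of the Maxwell
stress tensor minus the time derivative of the field momentum:
ρ_e E^i + (J×B)^i
  = ∂_j[ε E^iE^j + (1/μ)B^iB^j − ½(ε|E|² + (1/μ)|B|²)δ^{ij}] − ∂_t(εE×B)^i. -/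
theorem lorentz_force_conservation_form
    (E B : ℝ → (Fin 3 → ℝ) → Fin 3 → ℝ)
    (hE : ContDiff ℝ (⊤ : ℕ∞) (fun p : ℝ × (Fin 3 → ℝ) => E p.1 p.2))
    (hB : ContDiff ℝ (⊤ : ℕ∞) (fun p : ℝ × (Fin 3 → ℝ) => B p.1 p.2))
    (ε μ : ℝ) (hε : 0 < ε) (hμ : 0 < μ)
    (hdivB : ∀ t x, div3 B t x = 0)
    (hFaraday : ∀ t x, curl3 E t x = -ptv B t x)
    (ρe : ℝ → (Fin 3 → ℝ) → ℝ) (hρe : ∀ t x, ρe t x = ε * div3 E t x)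
    (J : ℝ → (Fin 3 → ℝ) → Fin 3 → ℝ)
    (hJ : ∀ t x, J t x = (1 / μ) • curl3 B t x - ε • ptv E t x) :
    ∀ t x (i : Fin 3),
      ρe t x * E t x i + crossProduct (J t x) (B t x) i
        = (∑ j : Fin 3, pd j (fun t x =>
            ε * E t x i * E t x j + (1 / μ) * B t x i * B t x j
              - (1 / 2) * (ε * (∑ k, E t x k ^ 2)
                + (1 / μ) * (∑ k, B t x k ^ 2)) * (if i = j then 1 else 0)) t x)
          - pt (fun t x => ε * crossProduct (E t x) (B t x) i) t x := by
  intro t x i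
  have hEd : ∀ (k j : Fin 3), HasDerivAt (fun s => E t (Function.update x j s) k)
      (pd j (fun t x => E t x k) t x) (x j) := fun k j => hasDerivAt_pd hE k j t x
  have hBd : ∀ (k j : Fin 3), HasDerivAt (fun s => B t (Function.update x j s) k)
      (pd j (fun t x => B t x k) t x) (x j) := fun k j => hasDerivAt_pd hB k j t x
  have hEt : ∀ k, HasDerivAt (fun s => E s x k) (pt (fun t x => E t x k) t x) t :=
    fun k => hasDerivAt_pt hE k t x
  have hBt : ∀ k, HasDerivAt (fun s => B s x k) (pt (fun t x => B t x k) t x) t :=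
    fun k => hasDerivAt_pt hB k t x
  have key : ∀ j : Fin 3, pd j (fun t x =>
      ε * E t x i * E t x j + (1 / μ) * B t x i * B t x j
        - (1 / 2) * (ε * (∑ k, E t x k ^ 2) + (1 / μ) * (∑ k, B t x k ^ 2))
          * (if i = j then 1 else 0)) t x
      = (ε * pd j (fun t x => E t x i) t x * E t x j
          + ε * E t x i * pd j (fun t x => E t x j) t x
        + ((1 / μ) * pd j (fun t x => B t x i) t x * B t x j
          + (1 / μ) * B t x i * pd j (fun t x => B t x j) t x))
        - (1 / 2) * (ε * (∑ k, (2 : ℕ) * E t x k ^ 1 * pd j (fun t x => E t x k) t x)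
            + (1 / μ) * (∑ k, (2 : ℕ) * B t x k ^ 1 * pd j (fun t x => B t x k) t x))
          * (if i = j then 1 else 0) := by
    intro j
    have h := ((((hEd i j).const_mul ε).mul (hEd j j)).add
        (((hBd i j).const_mul (1 / μ)).mul (hBd j j))).sub
      (((((HasDerivAt.fun_sum (u := Finset.univ) (fun k _ => (hEd k j).pow 2)).const_mul ε).add
          ((HasDerivAt.fun_sum (u := Finset.univ) (fun k _ => (hBd k j).pow 2)).const_mul (1 / μ))).const_mul
        (1 / 2)).mul_const (if i = j then (1 : ℝ) else 0))
    have h2 := h.deriv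
    simp only [Function.update_self, Function.update_eq_self] at h2
    simp only [pd]
    exact h2
  have htB0 : pt (fun t x => B t x 0) t x
      = pd 2 (fun t x => E t x 1) t x - pd 1 (fun t x => E t x 2) t x := by
    have h := congrFun (hFaraday t x) 0
    simp only [curl3, ptv, Matrix.cons_val_zero, Pi.neg_apply] at h
    linarith
  have htB1 : pt (fun t x => B t x 1) t x
      = pd 0 (fun t x => E t x 2) t x - pd 2 (fun t x => E t x 0) t x := by
    have h := congrFun (hFaraday t x) 1
    simp only [curl3, ptv, Matrix.cons_val_one, Matrix.head_cons, Matrix.cons_val_zero, Pi.neg_apply] at h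
    linarith
  have htB2 : pt (fun t x => B t x 2) t x
      = pd 1 (fun t x => E t x 0) t x - pd 0 (fun t x => E t x 1) t x := by
    have h := congrFun (hFaraday t x) 2
    simp only [curl3, ptv, Matrix.cons_val_two, Matrix.tail_cons, Matrix.head_cons,
      Pi.neg_apply] at h
    linarith
  have hdB : pd 2 (fun t x => B t x 2) t x
      = - pd 0 (fun t x => B t x 0) t x - pd 1 (fun t x => B t x 1) t x := by
    have h := hdivB t x
    simp only [div3, Fin.sum_univ_three] at h
    linarith
  rw [hρe, hJ]
  fin_cases i
  · simp only [Fin.zero_eta, Fin.isValue] at key ⊢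
    have hpt : pt (fun t x => ε * crossProduct (E t x) (B t x) (0 : Fin 3)) t x
        = ε * ((pt (fun t x => E t x 1) t x * B t x 2
            + E t x 1 * pt (fun t x => B t x 2) t x)
          - (pt (fun t x => E t x 2) t x * B t x 1
            + E t x 2 * pt (fun t x => B t x 1) t x)) := by
      have h := ((((hEt 1).mul (hBt 2)).sub ((hEt 2).mul (hBt 1))).const_mul ε).deriv
      simp only [pt]
      rw [show (fun s => ε * crossProduct (E s x) (B s x) (0 : Fin 3))
          = fun s => ε * (E s x 1 * B s x 2 - E s x 2 * B s x 1) by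
        funext s; simp [cross_apply]]
      exact h
    rw [Fin.sum_univ_three, key 0, key 1, key 2, hpt]
    simp only [htB1, htB2, hdB]
    simp only [div3, curl3, ptv, cross_apply, Fin.sum_univ_three, Matrix.cons_val_zero,
      Matrix.cons_val_one, Matrix.head_cons, Matrix.cons_val_two, Matrix.tail_cons,
      Pi.sub_apply, Pi.smul_apply, smul_eq_mul, pow_one, Nat.cast_ofNat, Fin.isValue,
      Fin.reduceEq, reduceIte, mul_one, mul_zero, sub_zero]
    have hμ' : μ ≠ 0 := ne_of_gt hμ
    field_simp
    ring
  · simp only [Fin.mk_one, Fin.isValue] at key ⊢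
    have hpt : pt (fun t x => ε * crossProduct (E t x) (B t x) (1 : Fin 3)) t x
        = ε * ((pt (fun t x => E t x 2) t x * B t x 0
            + E t x 2 * pt (fun t x => B t x 0) t x)
          - (pt (fun t x => E t x 0) t x * B t x 2
            + E t x 0 * pt (fun t x => B t x 2) t x)) := by
      have h := ((((hEt 2).mul (hBt 0)).sub ((hEt 0).mul (hBt 2))).const_mul ε).deriv
      simp only [pt]
      rw [show (fun s => ε * crossProduct (E s x) (B s x) (1 : Fin 3))
          = fun s => ε * (E s x 2 * B s x 0 - E s x 0 * B s x 2) by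
        funext s; simp [cross_apply]]
      exact h
    rw [Fin.sum_univ_three, key 0, key 1, key 2, hpt]
    simp only [htB0, htB2, hdB]
    simp only [div3, curl3, ptv, cross_apply, Fin.sum_univ_three, Matrix.cons_val_zero,
      Matrix.cons_val_one, Matrix.head_cons, Matrix.cons_val_two, Matrix.tail_cons,
      Pi.sub_apply, Pi.smul_apply, smul_eq_mul, pow_one, Nat.cast_ofNat, Fin.isValue,
      Fin.reduceEq, reduceIte, mul_one, mul_zero, sub_zero]
    have hμ' : μ ≠ 0 := ne_of_gt hμ
    field_simp
    ring
  · simp only [Fin.reduceFinMk, Fin.isValue] at key ⊢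
    have hpt : pt (fun t x => ε * crossProduct (E t x) (B t x) (2 : Fin 3)) t x
        = ε * ((pt (fun t x => E t x 0) t x * B t x 1
            + E t x 0 * pt (fun t x => B t x 1) t x)
          - (pt (fun t x => E t x 1) t x * B t x 0
            + E t x 1 * pt (fun t x => B t x 0) t x)) := by
      have h := ((((hEt 0).mul (hBt 1)).sub ((hEt 1).mul (hBt 0))).const_mul ε).deriv
      simp only [pt]
      rw [show (fun s => ε * crossProduct (E s x) (B s x) (2 : Fin 3))
          = fun s => ε * (E s x 0 * B s x 1 - E s x 1 * B s x 0) by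
        funext s; simp [cross_apply]]
      exact h
    rw [Fin.sum_univ_three, key 0, key 1, key 2, hpt]
    simp only [htB0, htB1, hdB]
    simp only [div3, curl3, ptv, cross_apply, Fin.sum_univ_three, Matrix.cons_val_zero,
      Matrix.cons_val_one, Matrix.head_cons, Matrix.cons_val_two, Matrix.tail_cons,
      Pi.sub_apply, Pi.smul_apply, smul_eq_mul, pow_one, Nat.cast_ofNat, Fin.isValue,
      Fin.reduceEq, reduceIte, mul_one, mul_zero, sub_zero]
    have hμ' : μ ≠ 0 := ne_of_gt hμ
    field_simp
    linear_combination (B t x 2) * hdB
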